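/- arXiv:2304.04837 — 3 statements merged into one kernel-verified Lean document; each statement's English description precedes it below -/
import Mathlib

section
/- Let d ∈ ℕ and let ‖·‖ be any norm on ℝ^d. Let A ⊆ ℝ^d be a bounded set with diameter D with respect to ‖·‖. Then the outer Lebesgue measure of A is at most the Lebesgue measure of a ball of radius D/2, i.e., m_out(A) ≤ (D/2)^d · m({x ∈ ℝ^d : ‖x‖ < 1}). -/
/-!
The closure `K` of `A` is measurable, has the same diameter and at least the outer measure of
`A`. For `x ∈ K` and `y ∈ -K` the midpoint `(x + y) / 2` lies in the closed ball of radius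
`D / 2`, so the Prékopa–Leindler inequality for the indicators of `K`, `-K` and that ball gives
`vol K ^ 2 ≤ vol (closedBall 0 (D / 2)) ^ 2`; rescaling the unit ball finishes.

Prékopa–Leindler is proved by induction on the dimension, integrating out one coordinate at a
time. In dimension one, after truncating `f` and `g` and normalising their suprema to `1`, every
superlevel set of `h` contains the midpoints of the corresponding superlevel sets of `f` and `g`,
so the one-dimensional Brunn–Minkowski inequality `|S| + |T| ≤ |S + T|` and the layer-cake
formula give `∫ f + ∫ g ≤ 2 ∫ h`, and AM–GM gives the product form.
-/

open MeasureTheory Set Filter Topology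
open scoped ENNReal NNReal Pointwise

theorem ENNReal.mul_le_sq_of_add_le_two_mul {a b c : ℝ≥0∞} (h : a + b ≤ 2 * c) :
    a * b ≤ c ^ 2 := by
  rcases eq_or_ne c ∞ with rfl | hc
  · simp
  have h2c : 2 * c ≠ ∞ := ENNReal.mul_ne_top ENNReal.ofNat_ne_top hc
  lift a to ℝ≥0 using ne_top_of_le_ne_top h2c (le_self_add.trans h)
  lift b to ℝ≥0 using ne_top_of_le_ne_top h2c (le_add_self.trans h)
  lift c to ℝ≥0 using hc
  norm_cast at h ⊢
  rw [← NNReal.coe_le_coe] at h ⊢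
  push_cast at h ⊢
  nlinarith [sq_nonneg ((a : ℝ) - b), a.2, b.2]

theorem lintegral_min_one_eq_setLIntegral_measure_lt {α : Type*} [MeasurableSpace α]
    (μ : Measure α) {f : α → ℝ≥0∞} (hf : Measurable f) :
    ∫⁻ x, min (f x) 1 ∂μ = ∫⁻ t in Ioo 0 1, μ {x | ENNReal.ofReal t < f x} := by
  set u : α → ℝ := fun x => (min (f x) 1).toReal
  have hu_ne_top : ∀ x, min (f x) 1 ≠ ∞ :=
    fun x => ne_top_of_le_ne_top ENNReal.one_ne_top (min_le_right _ _)
  have hu : ∀ x, ENNReal.ofReal (u x) = min (f x) 1 := fun x => ENNReal.ofReal_toReal (hu_ne_top x)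
  have hu₁ : ∀ x, u x ≤ 1 := fun x => ENNReal.toReal_le_of_le_ofReal zero_le_one (by simp)
  have hlevel : ∀ t ∈ Ioo (0 : ℝ) 1, μ {x | t < u x} = μ {x | ENNReal.ofReal t < f x} := by
    intro t ht
    congr 1
    ext x
    show t < u x ↔ ENNReal.ofReal t < f x
    rw [← ENNReal.ofReal_lt_iff_lt_toReal ht.1.le (hu_ne_top x), lt_min_iff,
      and_iff_left (ENNReal.ofReal_lt_one.mpr ht.2)]
  have hhigh : ∀ t ∈ Ici (1 : ℝ), μ {x | t < u x} = 0 := fun t ht =>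
    measure_mono_null (fun x hx => (not_lt.2 ((hu₁ x).trans ht) hx).elim) measure_empty
  calc ∫⁻ x, min (f x) 1 ∂μ = ∫⁻ x, ENNReal.ofReal (u x) ∂μ := by simp_rw [hu]
    _ = ∫⁻ t in Ioi 0, μ {x | t < u x} :=
        lintegral_eq_lintegral_meas_lt μ (ae_of_all _ fun _ => ENNReal.toReal_nonneg)
          (hf.min measurable_const).ennreal_toReal.aemeasurable
    _ = ∫⁻ t in Ioo 0 1, μ {x | t < u x} := by
        rw [← Ioo_union_Ici_eq_Ioi one_pos, lintegral_union measurableSet_Ici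
          (disjoint_left.2 fun t ht ht' => ht.2.not_ge ht'),
          setLIntegral_congr_fun measurableSet_Ici hhigh, lintegral_zero, add_zero]
    _ = ∫⁻ t in Ioo 0 1, μ {x | ENNReal.ofReal t < f x} :=
        setLIntegral_congr_fun measurableSet_Ioo hlevel

theorem lintegral_eq_iSup_lintegral_min_natCast {α : Type*} [MeasurableSpace α]
    (μ : Measure α) {f : α → ℝ≥0∞} (hf : Measurable f) :
    ∫⁻ x, f x ∂μ = ⨆ n : ℕ, ∫⁻ x, min (f x) n ∂μ := by
  rw [← lintegral_iSup (fun n => hf.min measurable_const)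
    fun m n hmn x => min_le_min_left _ (Nat.cast_le.mpr hmn)]
  congr with x
  rw [← inf_iSup_eq, ENNReal.iSup_natCast, inf_top_eq]

namespace Real

theorem volume_add_volume_le_volume_add_of_isCompact {K L : Set ℝ} (hK : IsCompact K)
    (hL : IsCompact L) (hK₀ : K.Nonempty) (hL₀ : L.Nonempty) :
    volume K + volume L ≤ volume (K + L) := by
  obtain ⟨a, haK, ha⟩ := hK.exists_isGreatest hK₀
  obtain ⟨b, hbL, hb⟩ := hL.exists_isLeast hL₀
  -- `b + K` and `a + L` lie in `K + L`, on either side of `a + b`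
  have hleft : b +ᵥ K ⊆ (K + L) ∩ Iic (a + b) := by
    rintro _ ⟨k, hk, rfl⟩
    exact ⟨⟨k, hk, b, hbL, add_comm k b⟩, show b + k ≤ a + b by linarith [ha hk]⟩
  have hright : (a +ᵥ L) \ {a + b} ⊆ (K + L) \ Iic (a + b) := by
    rintro _ ⟨⟨l, hl, rfl⟩, hne⟩
    refine ⟨⟨a, haK, l, hl, rfl⟩, fun hle => hne ?_⟩
    have := hb hl
    simp only [vadd_eq_add, mem_Iic, mem_singleton_iff] at hle ⊢
    linarith
  calc volume K + volume L = volume (b +ᵥ K) + volume ((a +ᵥ L) \ {a + b}) := by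
        rw [measure_sdiff_null (measure_singleton _), measure_vadd, measure_vadd]
    _ ≤ volume ((K + L) ∩ Iic (a + b)) + volume ((K + L) \ Iic (a + b)) :=
        add_le_add (measure_mono hleft) (measure_mono hright)
    _ = volume (K + L) := measure_inter_add_sdiff _ measurableSet_Iic

theorem volume_add_volume_le_volume_add {A B : Set ℝ} (hA : MeasurableSet A)
    (hB : MeasurableSet B) (hA₀ : A.Nonempty) (hB₀ : B.Nonempty) :
    volume A + volume B ≤ volume (A + B) := by
  obtain ⟨a, ha⟩ := hA₀
  obtain ⟨b, hb⟩ := hB₀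
  rw [hA.measure_eq_iSup_isCompact, hB.measure_eq_iSup_isCompact]
  simp only [iSup_and']
  refine ENNReal.biSup_add_biSup_le' ⟨∅, empty_subset _, isCompact_empty⟩
    ⟨∅, empty_subset _, isCompact_empty⟩ fun K ⟨hKA, hK⟩ L ⟨hLB, hL⟩ => ?_
  calc volume K + volume L ≤ volume (insert a K) + volume (insert b L) := by
        gcongr <;> exact subset_insert _ _
    _ ≤ volume (insert a K + insert b L) :=
        volume_add_volume_le_volume_add_of_isCompact (hK.insert a) (hL.insert b)
          (insert_nonempty a K) (insert_nonempty b L)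
    _ ≤ volume (A + B) := by gcongr; exacts [insert_subset ha hKA, insert_subset hb hLB]

theorem volume_add_volume_le_two_mul_of_midpoint_mem {S T U : Set ℝ}
    (hS : MeasurableSet S) (hT : MeasurableSet T) (hS₀ : S.Nonempty) (hT₀ : T.Nonempty)
    (hSTU : ∀ x ∈ S, ∀ y ∈ T, (x + y) / 2 ∈ U) : volume S + volume T ≤ 2 * volume U := by
  have hsub : S + T ⊆ (2 : ℝ) • U := by
    rintro _ ⟨x, hx, y, hy, rfl⟩
    exact ⟨(x + y) / 2, hSTU x hx y hy, by simp only [smul_eq_mul]; ring⟩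
  calc volume S + volume T ≤ volume (S + T) := volume_add_volume_le_volume_add hS hT hS₀ hT₀
    _ ≤ volume ((2 : ℝ) • U) := measure_mono hsub
    _ = 2 * volume U := by rw [Measure.addHaar_smul_of_nonneg volume zero_le_two]; simp

end Real

theorem prekopa_leindler_real_of_iSup_eq_one {f g h : ℝ → ℝ≥0∞} (hf : Measurable f)
    (hg : Measurable g) (hh : Measurable h) (hf₁ : ⨆ x, f x = 1) (hg₁ : ⨆ y, g y = 1)
    (hfgh : ∀ x y, f x * g y ≤ h ((x + y) / 2) ^ 2) :
    (∫⁻ x, f x) * ∫⁻ y, g y ≤ (∫⁻ z, h z) ^ 2 := by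
  refine ENNReal.mul_le_sq_of_add_le_two_mul ?_
  have hlevel : ∀ t ∈ Ioo (0 : ℝ) 1, volume {x | ENNReal.ofReal t < f x} +
      volume {y | ENNReal.ofReal t < g y} ≤ 2 * volume {z | ENNReal.ofReal t < h z} := by
    intro t ht
    have ht₁ : ENNReal.ofReal t < 1 := ENNReal.ofReal_lt_one.mpr ht.2
    refine Real.volume_add_volume_le_two_mul_of_midpoint_mem (hf measurableSet_Ioi)
      (hg measurableSet_Ioi) (lt_iSup_iff.mp (hf₁ ▸ ht₁ :)) (lt_iSup_iff.mp (hg₁ ▸ ht₁ :))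
      fun x hx y hy => ?_
    have hlt : ENNReal.ofReal t ^ 2 < f x * g y := sq (ENNReal.ofReal t) ▸ ENNReal.mul_lt_mul hx hy
    exact (ENNReal.pow_lt_pow_left_iff two_ne_zero).mp (hlt.trans_le (hfgh x y))
  have hf_eq : ∫⁻ x, f x = ∫⁻ t in Ioo 0 1, volume {x | ENNReal.ofReal t < f x} := by
    rw [← lintegral_min_one_eq_setLIntegral_measure_lt volume hf]
    simp_rw [min_eq_left (hf₁ ▸ le_iSup f _)]
  have hg_eq : ∫⁻ y, g y = ∫⁻ t in Ioo 0 1, volume {y | ENNReal.ofReal t < g y} := by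
    rw [← lintegral_min_one_eq_setLIntegral_measure_lt volume hg]
    simp_rw [min_eq_left (hg₁ ▸ le_iSup g _)]
  calc (∫⁻ x, f x) + ∫⁻ y, g y
      ≤ ∫⁻ t in Ioo 0 1, (volume {x | ENNReal.ofReal t < f x} +
          volume {y | ENNReal.ofReal t < g y}) := hf_eq ▸ hg_eq ▸ le_lintegral_add _ _
    _ ≤ ∫⁻ t in Ioo 0 1, 2 * volume {z | ENNReal.ofReal t < h z} :=
        setLIntegral_mono' measurableSet_Ioo hlevel
    _ = 2 * ∫⁻ z, min (h z) 1 := by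
        rw [lintegral_const_mul' _ _ ENNReal.ofNat_ne_top,
          lintegral_min_one_eq_setLIntegral_measure_lt volume hh]
    _ ≤ 2 * ∫⁻ z, h z := by gcongr; exact min_le_left _ _

theorem prekopa_leindler_real_of_iSup_ne_top {f g h : ℝ → ℝ≥0∞} (hf : Measurable f)
    (hg : Measurable g) (hh : Measurable h) (hf_top : ⨆ x, f x ≠ ∞) (hg_top : ⨆ y, g y ≠ ∞)
    (hfgh : ∀ x y, f x * g y ≤ h ((x + y) / 2) ^ 2) :
    (∫⁻ x, f x) * ∫⁻ y, g y ≤ (∫⁻ z, h z) ^ 2 := by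
  set F := ⨆ x, f x
  set G := ⨆ y, g y
  rcases eq_or_ne F 0 with hF | hF
  · simp [ENNReal.iSup_eq_zero.mp hF]
  rcases eq_or_ne G 0 with hG | hG
  · simp [ENNReal.iSup_eq_zero.mp hG]
  -- `c = √(F G)`; rescaling `f`, `g`, `h` by `F⁻¹`, `G⁻¹`, `c⁻¹` preserves `hfgh`
  obtain ⟨c, hc⟩ : ∃ c : ℝ≥0∞, c ^ 2 = F * G := ⟨_, ENNReal.rpow_inv_natCast_pow two_ne_zero _⟩
  have hc₀ : c ≠ 0 := by
    rintro rfl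
    exact mul_ne_zero hF hG (by simpa using hc.symm)
  have hc_top : c ≠ ∞ := by
    rintro rfl
    exact ENNReal.mul_ne_top hf_top hg_top (by simpa using hc.symm)
  have hnormal := prekopa_leindler_real_of_iSup_eq_one (f := fun x => F⁻¹ * f x)
    (g := fun y => G⁻¹ * g y) (h := fun z => c⁻¹ * h z) (hf.const_mul _) (hg.const_mul _)
    (hh.const_mul _) (by rw [← ENNReal.mul_iSup, ENNReal.inv_mul_cancel hF hf_top])
    (by rw [← ENNReal.mul_iSup, ENNReal.inv_mul_cancel hG hg_top]) fun x y => by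
      calc F⁻¹ * f x * (G⁻¹ * g y) = (c ^ 2)⁻¹ * (f x * g y) := by
            rw [hc, ENNReal.mul_inv (.inl hF) (.inl hf_top)]; ring
        _ ≤ (c⁻¹ * h ((x + y) / 2)) ^ 2 := by
            rw [mul_pow, ENNReal.inv_pow]; gcongr; exact hfgh x y
  simp only [lintegral_const_mul' _ _ (ENNReal.inv_ne_top.mpr hF),
    lintegral_const_mul' _ _ (ENNReal.inv_ne_top.mpr hG),
    lintegral_const_mul' _ _ (ENNReal.inv_ne_top.mpr hc₀)] at hnormal
  calc (∫⁻ x, f x) * ∫⁻ y, g y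
      = (F * F⁻¹ * ∫⁻ x, f x) * (G * G⁻¹ * ∫⁻ y, g y) := by
        rw [ENNReal.mul_inv_cancel hF hf_top, ENNReal.mul_inv_cancel hG hg_top, one_mul, one_mul]
    _ = c ^ 2 * ((F⁻¹ * ∫⁻ x, f x) * (G⁻¹ * ∫⁻ y, g y)) := by rw [hc]; ring
    _ ≤ c ^ 2 * (c⁻¹ * ∫⁻ z, h z) ^ 2 := by gcongr
    _ = (∫⁻ z, h z) ^ 2 := by
        rw [← mul_pow, ← mul_assoc, ENNReal.mul_inv_cancel hc₀ hc_top, one_mul]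

theorem prekopa_leindler_real {f g h : ℝ → ℝ≥0∞} (hf : Measurable f) (hg : Measurable g)
    (hh : Measurable h) (hfgh : ∀ x y, f x * g y ≤ h ((x + y) / 2) ^ 2) :
    (∫⁻ x, f x) * ∫⁻ y, g y ≤ (∫⁻ z, h z) ^ 2 := by
  have htrunc : ∀ n : ℕ, (∫⁻ x, min (f x) n) * ∫⁻ y, min (g y) n ≤ (∫⁻ z, h z) ^ 2 :=
    fun n => prekopa_leindler_real_of_iSup_ne_top (hf.min measurable_const)
      (hg.min measurable_const) hh
      (ne_top_of_le_ne_top (ENNReal.natCast_ne_top n) (iSup_le fun _ => min_le_right _ _))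
      (ne_top_of_le_ne_top (ENNReal.natCast_ne_top n) (iSup_le fun _ => min_le_right _ _))
      fun x y => (mul_le_mul' (min_le_left _ _) (min_le_left _ _)).trans (hfgh x y)
  have hmono : ∀ {u : ℝ → ℝ≥0∞}, Monotone fun n : ℕ => ∫⁻ x, min (u x) n :=
    fun hmn => lintegral_mono fun _ => min_le_min_left _ (Nat.cast_le.mpr hmn)
  rw [lintegral_eq_iSup_lintegral_min_natCast volume hf,
    lintegral_eq_iSup_lintegral_min_natCast volume hg, ENNReal.iSup_mul]
  refine iSup_le fun m => ?_
  rw [ENNReal.mul_iSup]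
  exact iSup_le fun n => (mul_le_mul' (hmono (le_max_left m n)) (hmono (le_max_right m n))).trans
    (htrunc (max m n))

theorem measurable_fin_cons {α : Type*} [MeasurableSpace α] {n : ℕ} :
    Measurable fun p : α × (Fin n → α) => (Fin.cons p.1 p.2 : Fin (n + 1) → α) := by
  refine measurable_pi_lambda _ fun i => ?_
  cases i using Fin.cases with
  | zero => exact measurable_fst
  | succ j => exact (measurable_pi_apply j).comp measurable_snd

theorem lintegral_fin_cons {α : Type*} [MeasureSpace α] [SigmaFinite (volume : Measure α)]
    {n : ℕ} {u : (Fin (n + 1) → α) → ℝ≥0∞} (hu : Measurable u) :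
    ∫⁻ x, u x = ∫⁻ s, ∫⁻ x, u (Fin.cons s x) := by
  set e := MeasurableEquiv.piFinSuccAbove (fun _ : Fin (n + 1) => α) 0
  have he : MeasurePreserving e.symm := (volume_preserving_piFinSuccAbove _ 0).symm
  rw [← he.lintegral_comp hu, Measure.volume_eq_prod,
    lintegral_prod (fun p => u (e.symm p)) (hu.comp he.measurable).aemeasurable]
  simp only [e, MeasurableEquiv.piFinSuccAbove_symm_apply, Fin.insertNthEquiv_zero]
  rfl

theorem Fin.cons_add_cons_div_two {α : Type*} [DivisionRing α] {n : ℕ} (s t : α)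
    (x y : Fin n → α) :
    ((Fin.cons s x : Fin (n + 1) → α) + Fin.cons t y) / 2 =
      Fin.cons ((s + t) / 2) ((x + y) / 2) := by
  ext i
  cases i using Fin.cases <;> simp

theorem prekopa_leindler {n : ℕ} {f g h : (Fin n → ℝ) → ℝ≥0∞} (hf : Measurable f)
    (hg : Measurable g) (hh : Measurable h) (hfgh : ∀ x y, f x * g y ≤ h ((x + y) / 2) ^ 2) :
    (∫⁻ x, f x) * ∫⁻ y, g y ≤ (∫⁻ z, h z) ^ 2 := by
  induction n with
  | zero =>
    have hvol : volume (univ : Set (Fin 0 → ℝ)) = 1 := by simp [volume_pi]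
    rw [lintegral_unique, lintegral_unique, lintegral_unique, hvol, mul_one, mul_one, mul_one]
    convert hfgh default default
  | succ n ih =>
    have hslice : ∀ {u : (Fin (n + 1) → ℝ) → ℝ≥0∞}, Measurable u →
        Measurable fun s => ∫⁻ x, u (Fin.cons s x) :=
      fun hu => (hu.comp measurable_fin_cons).lintegral_prod_right'
    have hcons : ∀ s : ℝ, Measurable fun x : Fin n → ℝ => (Fin.cons s x : Fin (n + 1) → ℝ) :=
      fun s => measurable_fin_cons.comp measurable_prodMk_left
    rw [lintegral_fin_cons hf, lintegral_fin_cons hg, lintegral_fin_cons hh]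
    refine prekopa_leindler_real (hslice hf) (hslice hg) (hslice hh) fun s t => ?_
    refine ih (hf.comp (hcons s)) (hg.comp (hcons t)) (hh.comp (hcons ((s + t) / 2))) fun x y => ?_
    simpa only [Fin.cons_add_cons_div_two] using hfgh (Fin.cons s x) (Fin.cons t y)

theorem volume_mul_volume_le_sq_of_midpoint_mem {n : ℕ} {K L M : Set (Fin n → ℝ)}
    (hK : MeasurableSet K) (hL : MeasurableSet L) (hM : MeasurableSet M)
    (hKLM : ∀ x ∈ K, ∀ y ∈ L, (x + y) / 2 ∈ M) : volume K * volume L ≤ volume M ^ 2 := by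
  rw [← lintegral_indicator_one hK, ← lintegral_indicator_one hL, ← lintegral_indicator_one hM]
  refine prekopa_leindler (measurable_one.indicator hK) (measurable_one.indicator hL)
    (measurable_one.indicator hM) fun x y => ?_
  by_cases hx : x ∈ K
  · by_cases hy : y ∈ L
    · simp [hx, hy, hKLM x hx y hy]
    · simp [hy]
  · simp [hx]

namespace Seminorm

variable {E : Type*} [NormedAddCommGroup E] [NormedSpace ℝ E] [FiniteDimensional ℝ E]
  (p : Seminorm ℝ E)

theorem continuous_of_finiteDimensional : Continuous p :=
  continuousOn_univ.mp (p.convexOn.continuousOn isOpen_univ)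

theorem measure_closedBall_zero_le [MeasurableSpace E] [BorelSpace E] (μ : Measure E)
    [μ.IsAddHaarMeasure] {r : ℝ} (hr : 0 < r) :
    μ (p.closedBall 0 r) ≤ ENNReal.ofReal (r ^ Module.finrank ℝ E) * μ (p.ball 0 1) := by
  have hball : ∀ s ∈ Ioi r,
      μ (p.closedBall 0 r) ≤ ENNReal.ofReal (s ^ Module.finrank ℝ E) * μ (p.ball 0 1) := by
    intro s hs
    have hs₀ : 0 < s := hr.trans hs
    calc μ (p.closedBall 0 r) ≤ μ (s • p.ball 0 1) := by
          rw [p.smul_ball_zero hs₀.ne', Real.norm_of_nonneg hs₀.le, mul_one]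
          exact measure_mono fun x hx => (p.mem_closedBall.mp hx).trans_lt hs
      _ = ENNReal.ofReal (s ^ Module.finrank ℝ E) * μ (p.ball 0 1) :=
          Measure.addHaar_smul_of_nonneg μ hs₀.le _
  have hlim : Tendsto (fun s : ℝ => ENNReal.ofReal (s ^ Module.finrank ℝ E) * μ (p.ball 0 1))
      (𝓝[>] r) (𝓝 (ENNReal.ofReal (r ^ Module.finrank ℝ E) * μ (p.ball 0 1))) :=
    ENNReal.Tendsto.mul_const
      (((ENNReal.continuous_ofReal.comp (continuous_pow _)).tendsto r).mono_left nhdsWithin_le_nhds)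
      (.inl (ENNReal.ofReal_pos.2 (pow_pos hr _)).ne')
  exact ge_of_tendsto hlim (eventually_nhdsWithin_of_forall hball)

end Seminorm

theorem Seminorm.sub_le_sSup_sub {E : Type*} [AddCommGroup E] [Module ℝ E]
    (p : Seminorm ℝ E) {A : Set E} {c : ℝ} (hc : ∀ x ∈ A, p x ≤ c) {x y : E} (hx : x ∈ A)
    (hy : y ∈ A) : p (x - y) ≤ sSup {r : ℝ | ∃ x ∈ A, ∃ y ∈ A, p (x - y) = r} := by
  refine le_csSup ⟨c + c, ?_⟩ ⟨x, hx, y, hy, rfl⟩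
  rintro _ ⟨x, hx, y, hy, rfl⟩
  exact (map_sub_le_add p x y).trans (add_le_add (hc x hx) (hc y hy))

theorem Seminorm.volume_le_volume_closedBall_half {d : ℕ} (p : Seminorm ℝ (Fin d → ℝ))
    {K : Set (Fin d → ℝ)} (hK : MeasurableSet K) {D : ℝ}
    (hKD : ∀ x ∈ K, ∀ y ∈ K, p (x - y) ≤ D) : volume K ≤ volume (p.closedBall 0 (D / 2)) := by
  have hM : MeasurableSet (p.closedBall 0 (D / 2)) := by
    rw [p.closedBall_zero_eq]
    exact measurableSet_le p.continuous_of_finiteDimensional.measurable measurable_const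
  have hmid : ∀ x ∈ K, ∀ y ∈ -K, (x + y) / 2 ∈ p.closedBall 0 (D / 2) := by
    intro x hx y hy
    have hxy : (x + y) / 2 - 0 = (2⁻¹ : ℝ) • (x - -y) := by
      ext i
      simp only [Pi.sub_apply, Pi.div_apply, Pi.add_apply, Pi.ofNat_apply, sub_zero,
        sub_neg_eq_add, Pi.smul_apply, smul_eq_mul]
      ring
    rw [p.mem_closedBall, hxy, map_smul_eq_mul, Real.norm_of_nonneg (by norm_num)]
    linarith [hKD x hx (-y) hy]
  have key := volume_mul_volume_le_sq_of_midpoint_mem hK hK.neg hM hmid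
  rwa [Measure.measure_neg, ← sq, ENNReal.pow_le_pow_left_iff two_ne_zero] at key

/-- Isodiametric inequality for an arbitrary norm `N` on `ℝ^d` (modeled as `Fin d → ℝ`):
if `A` is bounded with `N`-diameter `D`, then the outer Lebesgue measure of `A` is at most
`(D/2)^d` times the measure of the `N`-unit ball. -/
theorem isodiametric_inequality
    (d : ℕ) (hd : 0 < d)
    (N : (Fin d → ℝ) → ℝ)
    (hN0 : ∀ x, N x = 0 ↔ x = 0)
    (hN1 : ∀ (a : ℝ) (x : Fin d → ℝ), N (a • x) = |a| * N x)
    (hN2 : ∀ x y : Fin d → ℝ, N (x + y) ≤ N x + N y)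
    (A : Set (Fin d → ℝ)) (hA : ∃ c : ℝ, ∀ x ∈ A, N x ≤ c)
    (D : ℝ) (hD : D = sSup {r : ℝ | ∃ x ∈ A, ∃ y ∈ A, N (x - y) = r}) :
    volume A ≤ ENNReal.ofReal ((D / 2) ^ d) * volume {x : Fin d → ℝ | N x < 1} := by
  let p : Seminorm ℝ (Fin d → ℝ) := Seminorm.of N hN2 hN1
  obtain ⟨c, hc⟩ := hA
  have hAD : ∀ x ∈ A, ∀ y ∈ A, p (x - y) ≤ D :=
    fun x hx y hy => hD ▸ p.sub_le_sSup_sub hc hx hy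
  have hD₀ : 0 ≤ D := hD ▸ Real.sSup_nonneg (by rintro _ ⟨x, -, y, -, rfl⟩; exact apply_nonneg p _)
  rcases hD₀.eq_or_lt with rfl | hD₀
  · -- `A` is at most a point, which is a null set because `d > 0`
    have : Nonempty (Fin d) := ⟨⟨0, hd⟩⟩
    have hA₀ : A.Subsingleton := fun x hx y hy =>
      sub_eq_zero.mp ((hN0 _).mp (le_antisymm (hAD x hx y hy) (apply_nonneg p _)))
    simp [hA₀.measure_zero volume]
  have hKD : ∀ x ∈ closure A, ∀ y ∈ closure A, p (x - y) ≤ D := fun x hx y hy =>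
    isClosed_Iic.closure_subset <| map_mem_closure₂ (f := fun x y => p (x - y))
      (p.continuous_of_finiteDimensional.comp continuous_sub) hx hy hAD
  calc volume A ≤ volume (closure A) := measure_mono subset_closure
    _ ≤ volume (p.closedBall 0 (D / 2)) :=
        p.volume_le_volume_closedBall_half isClosed_closure.measurableSet hKD
    _ ≤ ENNReal.ofReal ((D / 2) ^ d) * volume (p.ball 0 1) := by
        simpa using p.measure_closedBall_zero_le volume (half_pos hD₀)
    _ = ENNReal.ofReal ((D / 2) ^ d) * volume {x : Fin d → ℝ | N x < 1} := by
        rw [p.ball_zero_eq]; rfl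
end

section
/- Let d ∈ ℕ, let ‖·‖ be any norm on ℝ^d, let ε ∈ (0, ∞), ε₀ ∈ (0, ∞), and let A : ℝ^d → ℝ^d be any function satisfying ‖A(x) − x‖ ≤ ε for all x ∈ ℝ^d. Then there exists a point p ∈ ℝ^d such that the image of the closed ball {x : ‖x − p‖ ≤ ε₀/2} under A contains at least ⌈(1 + ε₀/(2ε))^d⌉ distinct values. -/
/-!
Suppose every image under `A` of a closed ball of radius `r = ε₀ / 2` has at most `m` points.
Push each point `x` away from its image to `Φ x = A x + (1 + t) • (x - A x)` (`dilateFromImage`)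
with `t < r / ε`: this dilates every fibre of `A` by the factor `1 + t` about its value and moves
`x` by at most `t ε`. Take the sup-norm balls of diameter `(1 + t) δ` around `Φ x`, for `x` in a
`δ`-separated grid. The centres of those containing a given point `z` come from grid points within
`r` of `z`, and two grid points with the same image are dilated at least `(1 + t) δ` apart; so `z`
lies in at most `m` of the balls. Comparing volumes in a large cube gives `(1 + t) ^ d ≤ m`, and
letting `t → r / ε` gives `(1 + r / ε) ^ d ≤ m`.
-/

open MeasureTheory Filter Topology Metric Finset
open scoped ENNReal

namespace Seminorm

theorem le_sum_apply_single_mul_norm {ι : Type*} [Fintype ι] [DecidableEq ι]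
    (p : Seminorm ℝ (ι → ℝ)) (x : ι → ℝ) : p x ≤ (∑ i, p (Pi.single i 1)) * ‖x‖ := by
  calc p x = p (∑ i, x i • Pi.single i (1 : ℝ)) := by
        simp_rw [← Pi.single_smul, smul_eq_mul, mul_one, Finset.univ_sum_single]
    _ ≤ ∑ i, p (x i • Pi.single i (1 : ℝ)) :=
        Finset.le_sum_of_subadditive p (map_zero p).le (map_add_le_add p) _ _
    _ = ∑ i, p (Pi.single i 1) * ‖x i‖ := by simp_rw [map_smul_eq_mul, mul_comm]
    _ ≤ ∑ i, p (Pi.single i 1) * ‖x‖ := by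
        gcongr with i
        exact norm_le_pi_norm x i
    _ = (∑ i, p (Pi.single i 1)) * ‖x‖ := Finset.sum_mul ..|>.symm

theorem continuous_pi_real {ι : Type*} [Fintype ι] (p : Seminorm ℝ (ι → ℝ)) : Continuous p := by
  classical
  refine continuous_of_le (q := (∑ i, p (Pi.single i 1)).toNNReal • normSeminorm ℝ (ι → ℝ))
    ?_ fun x => ?_
  · exact continuous_const.mul continuous_norm
  · simpa [NNReal.smul_def, Real.coe_toNNReal _ (Finset.sum_nonneg fun i _ => apply_nonneg p _)]
      using le_sum_apply_single_mul_norm p x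

theorem exists_pos_mul_norm_le {E : Type*} [NormedAddCommGroup E] [NormedSpace ℝ E]
    [ProperSpace E] (p : Seminorm ℝ E) (hp : Continuous p) (hp₀ : ∀ x, p x = 0 → x = 0) :
    ∃ c > 0, ∀ x, c * ‖x‖ ≤ p x := by
  have hpos : ∀ u ∈ sphere (0 : E) 1, 0 < p u := fun u hu =>
    (apply_nonneg p u).lt_of_ne' fun h => ne_zero_of_mem_unit_sphere ⟨u, hu⟩ (hp₀ u h)
  obtain ⟨c, hc, hcp⟩ := (isCompact_sphere (0 : E) 1).exists_forall_le' hp.continuousOn hpos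
  refine ⟨c, hc, fun x => ?_⟩
  rcases eq_or_ne x 0 with rfl | hx
  · simp
  have hu : ‖x‖⁻¹ • x ∈ sphere (0 : E) 1 := by
    simpa using norm_smul_inv_norm (𝕜 := ℝ) hx
  have := hcp _ hu
  rw [map_smul_eq_mul, norm_inv, norm_norm, le_inv_mul_iff₀ (norm_pos_iff.mpr hx)] at this
  linarith

end Seminorm

theorem exists_separated_finset_card_eq (ι : Type*) [Fintype ι] {δ : ℝ} (hδ : 0 < δ) (K : ℕ) :
    ∃ G : Finset (ι → ℝ), #G = (2 * K + 1) ^ Fintype.card ι ∧ (∀ x ∈ G, ‖x‖ ≤ K * δ) ∧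
      ∀ x ∈ G, ∀ y ∈ G, x ≠ y → δ ≤ ‖x - y‖ := by
  classical
  set S : Finset ℝ := (Icc (-K : ℤ) K).image fun j : ℤ => δ * j
  have hinj : Function.Injective fun j : ℤ => δ * j := fun j j' h => by simpa [hδ.ne'] using h
  have hS : ∀ a ∈ S, |a| ≤ K * δ := by
    simp only [S, mem_image]
    rintro _ ⟨j, hj, rfl⟩
    rw [abs_mul, abs_of_pos hδ, mul_comm, ← Int.cast_abs]
    gcongr
    exact_mod_cast abs_le.mpr (mem_Icc.mp hj)
  have hSsep : ∀ a ∈ S, ∀ b ∈ S, a ≠ b → δ ≤ |a - b| := by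
    simp only [S, mem_image]
    rintro _ ⟨j, -, rfl⟩ _ ⟨j', -, rfl⟩ hne
    have h1 : (1 : ℝ) ≤ |(j : ℝ) - j'| := by
      exact_mod_cast Int.one_le_abs (sub_ne_zero.mpr fun h : j = j' => hne (by rw [h]))
    rw [← mul_sub, abs_mul, abs_of_pos hδ]
    nlinarith
  refine ⟨Fintype.piFinset fun _ => S, ?_, fun x hx => ?_, fun x hx y hy hxy => ?_⟩
  · rw [Fintype.card_piFinset, prod_const, card_univ, card_image_of_injective _ hinj, Int.card_Icc]
    congr 1
    omega
  · exact (pi_norm_le_iff_of_nonneg (by positivity)).mpr fun i =>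
      hS _ (Fintype.mem_piFinset.mp hx i)
  · obtain ⟨i, hi⟩ := Function.ne_iff.mp hxy
    exact (hSsep _ (Fintype.mem_piFinset.mp hx i) _ (Fintype.mem_piFinset.mp hy i) hi).trans
      (norm_le_pi_norm (x - y) i)

theorem le_of_forall_pow_mul_le_mul_add_pow {a b c : ℝ} {d : ℕ} {L : ℕ → ℝ}
    (hL : Tendsto L atTop atTop) (h : ∀ K, L K ^ d * a ≤ c * (L K + b) ^ d) : a ≤ c := by
  have hlim : Tendsto (fun K => c * (1 + b / L K) ^ d) atTop (𝓝 c) := by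
    simpa using (tendsto_const_nhds (x := c)).mul ((tendsto_const_nhds (x := (1 : ℝ)).add
      (tendsto_const_nhds.div_atTop hL)).pow d)
  refine ge_of_tendsto hlim ((hL.eventually_gt_atTop 0).mono fun K hK => ?_)
  rw [one_add_div hK.ne', div_pow, mul_div_assoc', le_div_iff₀ (by positivity), mul_comm]
  exact h K

open scoped Classical in
theorem MeasureTheory.sum_measure_le_mul_measure_biUnion {α ι : Type*} [MeasurableSpace α]
    (μ : Measure α) {s : Finset ι} {U : ι → Set α} (hU : ∀ i ∈ s, MeasurableSet (U i)) {m : ℕ}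
    (hm : ∀ x, #{i ∈ s | x ∈ U i} ≤ m) : ∑ i ∈ s, μ (U i) ≤ m * μ (⋃ i ∈ s, U i) := by
  have hcount : ∀ x,
      ∑ i ∈ s, (U i).indicator 1 x ≤ (⋃ i ∈ s, U i).indicator (fun _ => (m : ℝ≥0∞)) x := by
    intro x
    by_cases hx : x ∈ ⋃ i ∈ s, U i
    · rw [Set.indicator_of_mem hx, Finset.sum_indicator_eq_sum_filter]
      simpa using hm x
    · rw [Set.indicator_of_notMem hx]
      refine (sum_eq_zero fun i hi => Set.indicator_of_notMem ?_ _).le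
      exact fun hxi => hx (Set.mem_biUnion hi hxi)
  calc ∑ i ∈ s, μ (U i) = ∑ i ∈ s, ∫⁻ x, (U i).indicator 1 x ∂μ :=
        sum_congr rfl fun i hi => (lintegral_indicator_one (hU i hi)).symm
    _ = ∫⁻ x, ∑ i ∈ s, (U i).indicator 1 x ∂μ :=
        (lintegral_finsetSum s fun i hi => measurable_one.indicator (hU i hi)).symm
    _ ≤ ∫⁻ x, (⋃ i ∈ s, U i).indicator (fun _ => (m : ℝ≥0∞)) x ∂μ := lintegral_mono hcount
    _ = m * μ (⋃ i ∈ s, U i) := lintegral_indicator_const (measurableSet_biUnion s hU) _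

section Dilation

variable {E : Type*} [NormedAddCommGroup E] [NormedSpace ℝ E]

def dilateFromImage (A : E → E) (t : ℝ) (x : E) : E := A x + (1 + t) • (x - A x)

variable {A : E → E} {t : ℝ}

theorem self_sub_dilateFromImage (x : E) : x - dilateFromImage A t x = t • (A x - x) := by
  unfold dilateFromImage; module

theorem dilateFromImage_sub_dilateFromImage {x y : E} (h : A x = A y) :
    dilateFromImage A t x - dilateFromImage A t y = (1 + t) • (x - y) := by
  unfold dilateFromImage; rw [h]; module

open scoped Classical in
theorem card_filter_mem_ball_dilateFromImage_le {p : Seminorm ℝ E} {C ε r δ : ℝ} {m : ℕ}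
    {G : Finset E} (hC₀ : 0 ≤ C) (hC : ∀ x, p x ≤ C * ‖x‖) (hA : ∀ x, p (A x - x) ≤ ε) (ht : 0 ≤ t)
    (hr : t * ε + C * ((1 + t) * δ / 2) ≤ r) (hG : ∀ x ∈ G, ∀ y ∈ G, x ≠ y → δ ≤ ‖x - y‖)
    (hm : ∀ z (S : Finset E), ↑S ⊆ A '' {x | p (x - z) ≤ r} → #S ≤ m) (z : E) :
    #{x ∈ G | z ∈ ball (dilateFromImage A t x) ((1 + t) * δ / 2)} ≤ m := by
  set F := {x ∈ G | z ∈ ball (dilateFromImage A t x) ((1 + t) * δ / 2)}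
  have hinj : Set.InjOn A F := by
    intro x hx y hy hxy
    simp only [F, coe_filter, Set.mem_ofPred_eq, mem_ball'] at hx hy
    by_contra hne
    have hsep := hG x hx.1 y hy.1 hne
    have hclose : dist (dilateFromImage A t x) (dilateFromImage A t y) < (1 + t) * δ := by
      linarith [dist_triangle_right (dilateFromImage A t x) (dilateFromImage A t y) z]
    rw [dist_eq_norm, dilateFromImage_sub_dilateFromImage hxy, norm_smul,
      Real.norm_of_nonneg (by linarith)] at hclose
    nlinarith
  have hnear : ∀ x ∈ F, p (x - z) ≤ r := by
    intro x hx
    have hz : ‖dilateFromImage A t x - z‖ ≤ (1 + t) * δ / 2 := by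
      rw [← dist_eq_norm, ← mem_closedBall']
      exact ball_subset_closedBall (mem_filter.mp hx).2
    calc p (x - z) ≤ p (x - dilateFromImage A t x) + p (dilateFromImage A t x - z) := by
          simpa using map_add_le_add p (x - dilateFromImage A t x) (dilateFromImage A t x - z)
      _ ≤ t * ε + C * ((1 + t) * δ / 2) := by
          rw [self_sub_dilateFromImage, map_smul_eq_mul, Real.norm_of_nonneg ht]
          gcongr
          · exact hA x
          · exact (hC _).trans (by gcongr)
      _ ≤ r := hr
  rw [← card_image_of_injOn hinj]
  refine hm z _ fun v hv => ?_
  obtain ⟨x, hx, rfl⟩ := mem_image.mp hv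
  exact ⟨x, hnear x hx, rfl⟩

end Dilation

theorem card_mul_pow_le_of_dilateFromImage {ι : Type*} [Fintype ι] {A : (ι → ℝ) → ι → ℝ}
    {p : Seminorm ℝ (ι → ℝ)} {C ε η r t δ L : ℝ} {m : ℕ} {G : Finset (ι → ℝ)} (hC₀ : 0 ≤ C)
    (hC : ∀ x, p x ≤ C * ‖x‖) (hA : ∀ x, p (A x - x) ≤ ε) (hη : ∀ x, ‖A x - x‖ ≤ η)
    (ht : 0 ≤ t) (hδ : 0 < δ) (hL : 0 ≤ L) (hr : t * ε + C * ((1 + t) * δ / 2) ≤ r)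
    (hG : ∀ x ∈ G, ∀ y ∈ G, x ≠ y → δ ≤ ‖x - y‖) (hGL : ∀ x ∈ G, ‖x‖ ≤ L)
    (hm : ∀ z (S : Finset (ι → ℝ)), ↑S ⊆ A '' {x | p (x - z) ≤ r} → #S ≤ m) :
    #G * ((1 + t) * δ) ^ Fintype.card ι ≤ m * (2 * (L + t * η) + (1 + t) * δ) ^ Fintype.card ι := by
  set s := (1 + t) * δ / 2
  have hs : 0 < s := by positivity
  have hη₀ : 0 ≤ η := (norm_nonneg _).trans (hη 0)
  have hsub : ⋃ x ∈ G, ball (dilateFromImage A t x) s ⊆ ball 0 (L + t * η + s) := by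
    refine Set.iUnion₂_subset fun x hx y hy => ?_
    have hΦ : ‖dilateFromImage A t x‖ ≤ L + t * η := by
      calc ‖dilateFromImage A t x‖ ≤ ‖x‖ + ‖x - dilateFromImage A t x‖ := norm_le_insert _ _
        _ ≤ L + t * η := by
          rw [self_sub_dilateFromImage, norm_smul, Real.norm_of_nonneg ht]
          gcongr
          exacts [hGL x hx, hη x]
    rw [mem_ball, dist_zero_right]
    linarith [norm_le_norm_add_norm_sub' y (dilateFromImage A t x), mem_ball_iff_norm.mp hy]
  have key : ENNReal.ofReal (#G * ((1 + t) * δ) ^ Fintype.card ι) ≤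
      ENNReal.ofReal (m * (2 * (L + t * η + s)) ^ Fintype.card ι) := by
    calc ENNReal.ofReal (#G * ((1 + t) * δ) ^ Fintype.card ι)
        = ∑ x ∈ G, volume (ball (dilateFromImage A t x) s) := by
          simp_rw [Real.volume_pi_ball _ hs, sum_const, nsmul_eq_mul, ENNReal.ofReal_mul
            (Nat.cast_nonneg _), ENNReal.ofReal_natCast]
          congr 3; ring
      _ ≤ m * volume (⋃ x ∈ G, ball (dilateFromImage A t x) s) :=
          sum_measure_le_mul_measure_biUnion _ (fun _ _ => measurableSet_ball)
            (card_filter_mem_ball_dilateFromImage_le hC₀ hC hA ht hr hG hm)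
      _ ≤ m * volume (ball (0 : ι → ℝ) (L + t * η + s)) := by gcongr
      _ = ENNReal.ofReal (m * (2 * (L + t * η + s)) ^ Fintype.card ι) := by
          rw [Real.volume_pi_ball _ (by positivity), ENNReal.ofReal_mul (Nat.cast_nonneg _),
            ENNReal.ofReal_natCast]
  rw [ENNReal.ofReal_le_ofReal_iff (by positivity)] at key
  convert key using 3
  ring

section CardBound

variable {ι : Type*} [Fintype ι] {p : Seminorm ℝ (ι → ℝ)} {A : (ι → ℝ) → ι → ℝ} {ε r : ℝ}
  {m : ℕ}

theorem one_add_pow_le_of_forall_card_le (hp : ∀ x, p x = 0 → x = 0)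
    (hA : ∀ x, p (A x - x) ≤ ε) {t : ℝ} (ht : 0 < t) (htr : t * ε < r)
    (hm : ∀ z (S : Finset (ι → ℝ)), ↑S ⊆ A '' {x | p (x - z) ≤ r} → #S ≤ m) :
    (1 + t) ^ Fintype.card ι ≤ m := by
  classical
  set C := ∑ i, p (Pi.single i 1)
  have hC₀ : 0 ≤ C := sum_nonneg fun i _ => apply_nonneg p _
  obtain ⟨c, hc, hcp⟩ := p.exists_pos_mul_norm_le p.continuous_pi_real hp
  have hη : ∀ x, ‖A x - x‖ ≤ ε / c := fun x => by
    rw [le_div_iff₀ hc, mul_comm]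
    exact (hcp _).trans (hA x)
  obtain ⟨δ, hδ, hCδ⟩ := exists_pos_mul_lt (sub_pos.mpr htr) (C * ((1 + t) / 2))
  have hr : t * ε + C * ((1 + t) * δ / 2) ≤ r := by
    have : C * ((1 + t) * δ / 2) = C * ((1 + t) / 2) * δ := by ring
    linarith
  refine le_of_forall_pow_mul_le_mul_add_pow (d := Fintype.card ι)
    (L := fun K : ℕ => (2 * K + 1) * δ) (b := t * (2 * (ε / c) + δ)) ?_ fun K => ?_
  · exact Tendsto.atTop_mul_const hδ (tendsto_atTop_add_const_right _ _
      (tendsto_natCast_atTop_atTop.const_mul_atTop two_pos))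
  · obtain ⟨G, hGcard, hGL, hGsep⟩ := exists_separated_finset_card_eq ι hδ K
    have := card_mul_pow_le_of_dilateFromImage hC₀ p.le_sum_apply_single_mul_norm hA hη ht.le hδ
      (by positivity) hr hGsep hGL hm
    rw [hGcard] at this
    push_cast at this
    convert this using 1
    · rw [← mul_pow, ← mul_pow]
      ring
    · ring

theorem one_add_div_pow_le_of_forall_card_le (hp : ∀ x, p x = 0 → x = 0)
    (hA : ∀ x, p (A x - x) ≤ ε) (hε : 0 < ε) (hr : 0 < r)
    (hm : ∀ z (S : Finset (ι → ℝ)), ↑S ⊆ A '' {x | p (x - z) ≤ r} → #S ≤ m) :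
    (1 + r / ε) ^ Fintype.card ι ≤ m := by
  have hlim : Tendsto (fun t : ℝ => (1 + t) ^ Fintype.card ι) (𝓝[<] (r / ε))
      (𝓝 ((1 + r / ε) ^ Fintype.card ι)) :=
    tendsto_nhdsWithin_of_tendsto_nhds ((continuous_const.add continuous_id).pow _).continuousAt
  refine le_of_tendsto hlim (eventually_of_mem (Ioo_mem_nhdsLT (by positivity)) fun t ht => ?_)
  exact one_add_pow_le_of_forall_card_le hp hA ht.1 ((lt_div_iff₀ hε).mp ht.2) hm

end CardBound

theorem rounding_image_lower_bound_general
    (d : ℕ)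
    (N : (Fin d → ℝ) → ℝ)
    (hN0 : ∀ x, N x = 0 ↔ x = 0)
    (hN1 : ∀ (a : ℝ) (x : Fin d → ℝ), N (a • x) = |a| * N x)
    (hN2 : ∀ x y : Fin d → ℝ, N (x + y) ≤ N x + N y)
    (ε ε₀ : ℝ) (hε : 0 < ε) (hε₀ : 0 < ε₀)
    (A : (Fin d → ℝ) → (Fin d → ℝ)) (hA : ∀ x, N (A x - x) ≤ ε) :
    ∃ p : Fin d → ℝ, ∃ 𝒮 : Finset (Fin d → ℝ),
      (↑𝒮 : Set (Fin d → ℝ)) ⊆ A '' {x : Fin d → ℝ | N (x - p) ≤ ε₀ / 2} ∧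
      ⌈(1 + ε₀ / (2 * ε)) ^ d⌉₊ ≤ 𝒮.card := by
  by_contra! h
  set M := ⌈(1 + ε₀ / (2 * ε)) ^ d⌉₊
  let p : Seminorm ℝ (Fin d → ℝ) := Seminorm.of N hN2 fun a x => by
    rw [Real.norm_eq_abs]; exact hN1 a x
  have hbound := one_add_div_pow_le_of_forall_card_le (p := p) (m := M - 1)
    (fun x => (hN0 x).mp) hA hε (half_pos hε₀) fun z S hS => Nat.le_sub_one_of_lt (h z S hS)
  have hM : 0 < M := Nat.ceil_pos.mpr (by positivity)
  rw [div_div, Fintype.card_fin, Nat.cast_pred hM] at hbound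
  linarith [Nat.ceil_lt_add_one (show 0 ≤ (1 + ε₀ / (2 * ε)) ^ d by positivity)]

/-- If `A : ℝ^d → ℝ^d` (with `ℝ^d` modeled as `Fin d → ℝ` and an arbitrary norm `N`) moves no
point by more than `ε`, then there is a point `p` such that the image under `A` of the closed
`N`-ball of radius `ε₀/2` around `p` contains at least `⌈(1 + ε₀/(2ε))^d⌉` distinct values. -/
theorem rounding_image_lower_bound
    (d : ℕ) (hd : 0 < d)
    (N : (Fin d → ℝ) → ℝ)
    (hN0 : ∀ x, N x = 0 ↔ x = 0)
    (hN1 : ∀ (a : ℝ) (x : Fin d → ℝ), N (a • x) = |a| * N x)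
    (hN2 : ∀ x y : Fin d → ℝ, N (x + y) ≤ N x + N y)
    (ε ε₀ : ℝ) (hε : 0 < ε) (hε₀ : 0 < ε₀)
    (A : (Fin d → ℝ) → (Fin d → ℝ)) (hA : ∀ x, N (A x - x) ≤ ε) :
    ∃ p : Fin d → ℝ, ∃ 𝒮 : Finset (Fin d → ℝ),
      (↑𝒮 : Set (Fin d → ℝ)) ⊆ A '' {x : Fin d → ℝ | N (x - p) ≤ ε₀ / 2} ∧
      ⌈(1 + ε₀ / (2 * ε)) ^ d⌉₊ ≤ 𝒮.card :=
  rounding_image_lower_bound_general d N hN0 hN1 hN2 ε ε₀ hε hε₀ A hA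
end

section
/- Suppose that for every n ∈ ℕ there exists an (n + 1, 1/(2n))-secluded unit cube partition of ℝ^n. Then for any function f : ℕ → ℕ and every d ∈ ℕ, there exists a (k(d), ε(d))-secluded unit cube partition of ℝ^d with k(d) = (f(d) + 1)^{⌈d/f(d)⌉} and ε(d) = 1/(2 f(d)). -/
/-!
Split the `d` coordinates into `⌈d / m⌉` blocks of at most `m = f d` coordinates. On a block of
`n ≤ m` coordinates the hypothesis gives an `(n + 1, 1/(2n))`-secluded, hence
`(m + 1, 1/(2m))`-secluded, unit cube partition. The products of one cube from each block form a
unit cube partition of `ℝ^d`, and since an `ℓ∞` ball is the product of its projections to the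
blocks, it meets at most `(m + 1) ^ ⌈d / m⌉` of these products.
-/

open Set Metric

variable {α β : Type*}

theorem Setoid.IsPartition.image2_prod {P : Set (Set α)} {Q : Set (Set β)}
    (hP : Setoid.IsPartition P) (hQ : Setoid.IsPartition Q) :
    Setoid.IsPartition (image2 (· ×ˢ ·) P Q) := by
  refine ⟨?_, fun z => ?_⟩
  · rintro ⟨X, hX, Y, hY, hXY⟩
    exact ((nonempty_of_mem_partition hP hX).prod (nonempty_of_mem_partition hQ hY)).ne_empty hXY
  · obtain ⟨X, ⟨hX, hzX⟩, hX_unique⟩ := hP.2 z.1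
    obtain ⟨Y, ⟨hY, hzY⟩, hY_unique⟩ := hQ.2 z.2
    refine ⟨X ×ˢ Y, ⟨mem_image2_of_mem hX hY, hzX, hzY⟩, ?_⟩
    rintro _ ⟨⟨X', hX', Y', hY', rfl⟩, hzX', hzY'⟩
    rw [hX_unique X' ⟨hX', hzX'⟩, hY_unique Y' ⟨hY', hzY'⟩]

theorem Setoid.IsPartition.image_equiv {P : Set (Set α)} (hP : Setoid.IsPartition P)
    (e : α ≃ β) : Setoid.IsPartition ((e '' ·) '' P) := by
  refine ⟨?_, fun b => ?_⟩
  · rintro ⟨X, hX, hXe⟩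
    exact hP.1 (image_eq_empty.1 hXe ▸ hX)
  · obtain ⟨X, ⟨hX, hbX⟩, hX_unique⟩ := hP.2 (e.symm b)
    refine ⟨e '' X, ⟨mem_image_of_mem _ hX, (e.image_eq_preimage_symm X).superset hbX⟩, ?_⟩
    rintro _ ⟨⟨X', hX', rfl⟩, hbX'⟩
    rw [hX_unique X' ⟨hX', (e.image_eq_preimage_symm X').subset hbX'⟩]

def Secluded [PseudoMetricSpace α] (P : Set (Set α)) (k : ℕ) (ε : ℝ) : Prop :=
  ∀ p, {X ∈ P | (X ∩ closedBall p ε).Nonempty}.encard ≤ k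

section Secluded

variable [PseudoMetricSpace α] [PseudoMetricSpace β]

theorem Secluded.mono {P : Set (Set α)} {k k' : ℕ} {ε ε' : ℝ} (hP : Secluded P k ε)
    (hk : k ≤ k') (hε : ε' ≤ ε) : Secluded P k' ε' := by
  intro p
  have hsub : {X ∈ P | (X ∩ closedBall p ε').Nonempty} ⊆
      {X ∈ P | (X ∩ closedBall p ε).Nonempty} := fun X hX =>
    ⟨hX.1, hX.2.mono (inter_subset_inter_right _ (closedBall_subset_closedBall hε))⟩
  exact (encard_mono hsub).trans ((hP p).trans (by exact_mod_cast hk))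

theorem Secluded.image2_prod {P : Set (Set α)} {Q : Set (Set β)} {k l : ℕ} {ε : ℝ}
    (hP : Secluded P k ε) (hQ : Secluded Q l ε) : Secluded (image2 (· ×ˢ ·) P Q) (k * l) ε := by
  intro p
  set P' := {X ∈ P | (X ∩ closedBall p.1 ε).Nonempty}
  set Q' := {Y ∈ Q | (Y ∩ closedBall p.2 ε).Nonempty}
  have hsub : {S ∈ image2 (· ×ˢ ·) P Q | (S ∩ closedBall p ε).Nonempty} ⊆
      image2 (· ×ˢ ·) P' Q' := by
    rintro _ ⟨⟨X, hX, Y, hY, rfl⟩, z, hzXY, hzp⟩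
    rw [← closedBall_prod_same] at hzp
    exact ⟨X, ⟨hX, z.1, hzXY.1, hzp.1⟩, Y, ⟨hY, z.2, hzXY.2, hzp.2⟩, rfl⟩
  calc _ ≤ _ := encard_mono hsub
    _ ≤ (P' ×ˢ Q').encard := by rw [← image_prod]; exact encard_image_le _ _
    _ ≤ (k * l : ℕ) := by rw [encard_prod, Nat.cast_mul]; exact mul_le_mul' (hP p.1) (hQ p.2)

theorem Secluded.image_isometryEquiv {P : Set (Set α)} {k : ℕ} {ε : ℝ} (hP : Secluded P k ε)
    (e : α ≃ᵢ β) : Secluded ((e '' ·) '' P) k ε := by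
  intro p
  have hsub : {Y ∈ (e '' ·) '' P | (Y ∩ closedBall p ε).Nonempty} ⊆
      (e '' ·) '' {X ∈ P | (X ∩ closedBall (e.symm p) ε).Nonempty} := by
    rintro _ ⟨⟨X, hX, rfl⟩, _, ⟨x, hx, rfl⟩, hxp⟩
    exact ⟨X, ⟨hX, x, hx, by rwa [mem_closedBall, ← e.dist_eq, e.apply_symm_apply]⟩, rfl⟩
  exact (encard_mono hsub).trans ((encard_image_le _ _).trans (hP _))

end Secluded

def unitCube {ι : Type*} (t : ι → ℝ) : Set (ι → ℝ) := univ.pi fun i => Ico (t i) (t i + 1)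

theorem Fin.appendIsometry_image_unitCube_prod {a b : ℕ} (t : Fin a → ℝ) (s : Fin b → ℝ) :
    Fin.appendIsometry a b '' (unitCube t ×ˢ unitCube s) = unitCube (Fin.append t s) := by
  rw [← IsometryEquiv.preimage_symm]
  ext z
  simp [unitCube, Fin.forall_fin_add]

def HasSecludedUnitCubePartition (n k : ℕ) (ε : ℝ) : Prop :=
  ∃ P : Set (Set (Fin n → ℝ)), Setoid.IsPartition P ∧ (∀ X ∈ P, ∃ t, X = unitCube t) ∧
    Secluded P k ε

namespace HasSecludedUnitCubePartition

theorem mono {n k k' : ℕ} {ε ε' : ℝ} (h : HasSecludedUnitCubePartition n k ε) (hk : k ≤ k')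
    (hε : ε' ≤ ε) : HasSecludedUnitCubePartition n k' ε' :=
  let ⟨P, hPart, hCube, hSecl⟩ := h
  ⟨P, hPart, hCube, hSecl.mono hk hε⟩

theorem add {a b k l : ℕ} {ε : ℝ} (hP : HasSecludedUnitCubePartition a k ε)
    (hQ : HasSecludedUnitCubePartition b l ε) : HasSecludedUnitCubePartition (a + b) (k * l) ε := by
  obtain ⟨P, hPpart, hPcube, hPsecl⟩ := hP
  obtain ⟨Q, hQpart, hQcube, hQsecl⟩ := hQ
  refine ⟨(Fin.appendIsometry a b '' ·) '' image2 (· ×ˢ ·) P Q,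
    (hPpart.image2_prod hQpart).image_equiv (Fin.appendIsometry a b).toEquiv, ?_,
    (hPsecl.image2_prod hQsecl).image_isometryEquiv _⟩
  rintro _ ⟨_, ⟨X, hX, Y, hY, rfl⟩, rfl⟩
  obtain ⟨t, rfl⟩ := hPcube X hX
  obtain ⟨s, rfl⟩ := hQcube Y hY
  exact ⟨Fin.append t s, Fin.appendIsometry_image_unitCube_prod t s⟩

end HasSecludedUnitCubePartition

theorem Nat.ceil_natCast_add_div_self {m : ℕ} (hm : m ≠ 0) (d : ℕ) :
    ⌈((m + d : ℕ) : ℝ) / m⌉₊ = ⌈(d : ℝ) / m⌉₊ + 1 := by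
  rw [Nat.cast_add, add_div, div_self (by exact_mod_cast hm), add_comm,
    Nat.ceil_add_one (by positivity)]

theorem hasSecludedUnitCubePartition_pow_ceil_div {m k : ℕ} {ε : ℝ} (hm : 0 < m)
    (hbase : ∀ n, 0 < n → n ≤ m → HasSecludedUnitCubePartition n k ε) :
    ∀ d, 0 < d → HasSecludedUnitCubePartition d (k ^ ⌈(d : ℝ) / m⌉₊) ε := by
  intro d
  induction d using Nat.strong_induction_on with
  | _ d ih =>
    intro hd
    by_cases hdm : d ≤ m
    · refine (hbase d hd hdm).mono (Nat.le_self_pow ?_ k) le_rfl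
      exact (Nat.ceil_pos.2 (by positivity)).ne'
    · obtain ⟨d', rfl⟩ : ∃ d', d = m + d' := ⟨d - m, by omega⟩
      rw [Nat.ceil_natCast_add_div_self hm.ne', pow_succ']
      exact HasSecludedUnitCubePartition.add (hbase m hm le_rfl) (ih d' (by omega) (by omega))

/-- Gluing construction: assuming that for every `n ≥ 1` there is an `(n+1, 1/(2n))`-secluded
unit cube partition of `ℝ^n` (modeled as `Fin n → ℝ` with the ℓ∞ norm), for any function
`f : ℕ → ℕ` (with positive values) and every `d ≥ 1` there is a
`((f d + 1)^⌈d / f d⌉, 1/(2 f d))`-secluded unit cube partition of `ℝ^d`. -/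
theorem glue_construction
    (H : ∀ n : ℕ, 0 < n → ∃ P : Set (Set (Fin n → ℝ)),
      Setoid.IsPartition P ∧
      (∀ X ∈ P, ∃ t : Fin n → ℝ,
        X = Set.univ.pi fun i => Set.Ico (t i) (t i + 1)) ∧
      (∀ p : Fin n → ℝ,
        {X ∈ P | (X ∩ Metric.closedBall p (1 / (2 * (n : ℝ)))).Nonempty}.encard
          ≤ ((n + 1 : ℕ) : ℕ∞))) :
    ∀ f : ℕ → ℕ, (∀ m, 0 < f m) → ∀ d : ℕ, 0 < d →
      ∃ P : Set (Set (Fin d → ℝ)),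
        Setoid.IsPartition P ∧
        (∀ X ∈ P, ∃ t : Fin d → ℝ,
          X = Set.univ.pi fun i => Set.Ico (t i) (t i + 1)) ∧
        (∀ p : Fin d → ℝ,
          {X ∈ P | (X ∩ Metric.closedBall p (1 / (2 * (f d : ℝ)))).Nonempty}.encard
            ≤ (((f d + 1) ^ ⌈(d : ℝ) / (f d : ℝ)⌉₊ : ℕ) : ℕ∞)) := by
  intro f hf d hd
  refine hasSecludedUnitCubePartition_pow_ceil_div (hf d) (fun n hn hnm => ?_) d hd
  have hn_secl : HasSecludedUnitCubePartition n (n + 1) (1 / (2 * n)) := H n hn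
  refine hn_secl.mono (by omega) (one_div_le_one_div_of_le (by positivity) ?_)
  exact_mod_cast Nat.mul_le_mul_left 2 hnm
end
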